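/- arXiv:1009.0843 — 3 statements merged into one kernel-verified Lean document; each statement's English description precedes it below -/
import Mathlib

section
/- For any continuous compactly supported g: ℝ → ℂ, lim_{t→∞} ∫_ℝ (1 − cos(tu))/(t u²) g(u) du = π g(0). -/
open MeasureTheory Filter Real Complex intervalIntegral


noncomputable def K' (x : ℝ) : ℝ := (1 - Real.cos x) / x ^ 2

lemma K'_nonneg (x : ℝ) : 0 ≤ K' x := by
  apply div_nonneg (by simpa using Real.cos_le_one x) (sq_nonneg x)

lemma K'_le (x : ℝ) : K' x ≤ min 1 (2 / x ^ 2) := by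
  rcases eq_or_ne x 0 with h | h
  · simp [K', h]
  · refine le_min ?_ ?_
    · rw [K', div_le_one (by positivity)]
      nlinarith [Real.one_sub_sq_div_two_le_cos (x := x)]
    · rw [K']
      gcongr
      nlinarith [Real.neg_one_le_cos x]
  
lemma K'_meas : Measurable K' := by
  unfold K'; fun_prop

lemma K'_integrable : Integrable K' := by
  have h1 : IntegrableOn K' (Set.Icc (-1) 1) := by
    refine Integrable.mono' (integrable_const 1) K'_meas.aestronglyMeasurable.restrict ?_
    filter_upwards with x
    rw [Real.norm_of_nonneg (K'_nonneg x)]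
    exact (K'_le x).trans (min_le_left _ _)
  have h2 : IntegrableOn (fun x : ℝ => 2 / x ^ 2) (Set.Ioi (1:ℝ)) := by
    have h : IntegrableOn (fun x : ℝ => x ^ (-2 : ℝ)) (Set.Ioi (1:ℝ)) :=
      integrableOn_Ioi_rpow_of_lt (by norm_num) one_pos
    apply MeasureTheory.IntegrableOn.congr_fun (h.const_mul 2) ?_ measurableSet_Ioi
    intro x hx
    have hx0 : (0:ℝ) < x := lt_trans one_pos hx
    show 2 * x ^ (-2:ℝ) = 2 / x ^ 2
    rw [show (2:ℝ)/x^2 = 2 * (x^2)⁻¹ by ring, ← Real.rpow_natCast x 2,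
      ← Real.rpow_neg hx0.le]
    norm_num
  have h3 : IntegrableOn K' (Set.Ioi (1:ℝ)) := by
    refine Integrable.mono' h2 K'_meas.aestronglyMeasurable.restrict ?_
    filter_upwards with x
    rw [Real.norm_of_nonneg (K'_nonneg x)]
    exact (K'_le x).trans (min_le_right _ _)
  have hKeven : ∀ x : ℝ, K' (-x) = K' x := by
    intro x; simp [K', Real.cos_neg]
  have hmp : MeasurePreserving (fun x : ℝ => -x)
      ((volume : Measure ℝ).restrict (Set.Iio (-1:ℝ)))
      ((volume : Measure ℝ).restrict (Set.Ioi (1:ℝ))) := by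
    have h := (Measure.measurePreserving_neg (volume : Measure ℝ)).restrict_preimage
      (measurableSet_Ioi (a := (1:ℝ)))
    have hpre : (fun x : ℝ => -x) ⁻¹' Set.Ioi 1 = Set.Iio (-1) := by
      ext x; simp [Set.mem_Ioi, Set.mem_Iio, lt_neg]
    rwa [show (Neg.neg ⁻¹' Set.Ioi (1:ℝ)) = Set.Iio (-1:ℝ) from hpre] at h
  have h4 : IntegrableOn K' (Set.Iio (-1:ℝ)) := by
    have hemb : MeasurableEmbedding (fun x : ℝ => -x) :=
      (MeasurableEquiv.neg ℝ).measurableEmbedding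
    have := (hmp.integrable_comp_emb hemb).mpr h3
    have heq : (K' ∘ fun x : ℝ => -x) = K' := funext fun x => hKeven x
    rwa [heq] at this
  have : IntegrableOn K' (Set.Iio (-1) ∪ (Set.Icc (-1) 1 ∪ Set.Ioi 1)) :=
    h4.union (h1.union h3)
  rw [show (Set.Iio (-1:ℝ) ∪ (Set.Icc (-1) 1 ∪ Set.Ioi 1)) = Set.univ by
    ext x
    simp only [Set.mem_union, Set.mem_Iio, Set.mem_Icc, Set.mem_Ioi, Set.mem_univ, iff_true]
    by_cases h : x < -1
    · exact Or.inl h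
    · by_cases h' : x ≤ 1
      · exact Or.inr (Or.inl ⟨le_of_not_gt h, h'⟩)
      · exact Or.inr (Or.inr (lt_of_not_ge h'))] at this
  rwa [integrableOn_univ] at this


lemma piece1 (c : ℂ) (hc : c ≠ 0) :
    ∫ x in (0:ℝ)..1, (1 - (x:ℂ)) * Complex.exp (c * x)
      = Complex.exp c / c ^ 2 - 1 / c - 1 / c ^ 2 := by
  have key : ∀ x ∈ Set.uIcc (0:ℝ) 1,
      HasDerivAt (fun y : ℝ => Complex.exp (c * y) * ((1 - (y:ℂ)) / c + 1 / c ^ 2))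
        ((1 - (x:ℂ)) * Complex.exp (c * x)) x := by
    intro x _
    have h1 : HasDerivAt (fun y : ℝ => Complex.exp (c * y)) (c * Complex.exp (c * x)) x := by
      have := ((Complex.hasDerivAt_exp (c * x)).comp (x:ℂ)
        ((hasDerivAt_id ((x:ℂ))).const_mul c)).comp_ofReal
      simpa [mul_comm] using this
    have h2 : HasDerivAt (fun y : ℝ => ((1 - (y:ℂ)) / c + 1 / c ^ 2)) (-(1/c)) x := by
      have : HasDerivAt (fun z : ℂ => (1 - z) / c + 1 / c ^ 2) (-(1/c)) (x:ℂ) := by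
        have h := (((hasDerivAt_id ((x:ℂ))).const_sub 1).div_const c).add_const (1 / c ^ 2)
        simpa [neg_div] using h
      exact this.comp_ofReal
    have := h1.mul h2
    refine this.congr_deriv ?_
    field_simp
    ring
  rw [intervalIntegral.integral_eq_sub_of_hasDerivAt key
    (by apply Continuous.intervalIntegrable; fun_prop)]
  push_cast
  field_simp
  rw [mul_zero, Complex.exp_zero]
  ring

lemma piece2 (c : ℂ) (hc : c ≠ 0) :
    ∫ x in (-1:ℝ)..0, (1 + (x:ℂ)) * Complex.exp (c * x)
      = Complex.exp (-c) / c ^ 2 + 1 / c - 1 / c ^ 2 := by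
  have h := intervalIntegral.integral_comp_neg (a := (0:ℝ)) (b := 1)
    (fun u : ℝ => (1 + (u:ℂ)) * Complex.exp (c * u))
  simp only [neg_zero, neg_neg] at h
  have h2 : (∫ x in (0:ℝ)..1, (1 + (-x:ℝ) : ℂ) * Complex.exp (c * (-x:ℝ)))
      = ∫ x in (0:ℝ)..1, (1 - (x:ℂ)) * Complex.exp ((-c) * x) := by
    apply intervalIntegral.integral_congr
    intro x _
    push_cast
    ring_nf
  rw [← h, h2, piece1 (-c) (neg_ne_zero.mpr hc)]
  rw [show ((-c)^2 : ℂ) = c ^ 2 by ring, div_neg]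
  ring

noncomputable def tent (x : ℝ) : ℂ := ((max 0 (1 - |x|) : ℝ) : ℂ)

lemma tent_continuous : Continuous tent := by
  unfold tent; fun_prop

lemma tent_zero_of (x : ℝ) (hx : 1 ≤ |x|) : tent x = 0 := by
  simp only [tent, Complex.ofReal_eq_zero]
  exact max_eq_left (by linarith)

lemma tent_support : Function.support tent ⊆ Set.Ioc (-1 : ℝ) 1 := by
  intro x hx
  by_contra h
  apply hx
  apply tent_zero_of
  simp only [Set.mem_Ioc, not_and_or, not_lt, not_le] at h
  rcases h with h | h
  · rw [abs_of_nonpos (by linarith)]; linarith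
  · rw [abs_of_pos (by linarith)]; linarith

lemma tent_hasCompactSupport : HasCompactSupport tent := by
  apply HasCompactSupport.intro (isCompact_Icc (a := (-1:ℝ)) (b := 1))
  intro x hx
  apply tent_zero_of
  simp only [Set.mem_Icc, not_and_or, not_le] at hx
  rcases hx with h | h
  · rw [abs_of_nonpos (by linarith)]; linarith
  · rw [abs_of_pos (by linarith)]; linarith

lemma fourier_tent (ξ : ℝ) (hξ : ξ ≠ 0) :
    FourierTransform.fourier tent ξ
      = (((1 - Real.cos (2 * π * ξ)) / (2 * π ^ 2 * ξ ^ 2) : ℝ) : ℂ) := by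
  set c : ℂ := ((-2 * π * ξ : ℝ) : ℂ) * Complex.I with hcdef
  have hc : c ≠ 0 := by
    rw [hcdef]
    apply mul_ne_zero _ Complex.I_ne_zero
    exact Complex.ofReal_ne_zero.mpr
      (mul_ne_zero (mul_ne_zero (by norm_num) Real.pi_ne_zero) hξ)
  rw [Real.fourier_real_eq_integral_exp_smul]
  have heq : ∀ v : ℝ, Complex.exp (((-2 * π * v * ξ : ℝ) : ℂ) * Complex.I) • tent v
      = Complex.exp (c * v) * tent v := by
    intro v
    rw [smul_eq_mul]
    congr 2
    rw [hcdef]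
    push_cast
    ring
  simp_rw [heq]
  have hsupp : Function.support (fun v : ℝ => Complex.exp (c * v) * tent v)
      ⊆ Set.Ioc (-1 : ℝ) 1 := by
    intro v hv
    apply tent_support
    intro h0
    apply hv
    simp [h0]
  rw [← intervalIntegral.integral_eq_integral_of_support_subset hsupp]
  rw [← intervalIntegral.integral_add_adjacent_intervals
    (a := (-1:ℝ)) (b := 0) (c := 1)
    (by apply Continuous.intervalIntegrable; exact (Complex.continuous_exp.comp (by fun_prop)).mul tent_continuous)
    (by apply Continuous.intervalIntegrable; exact (Complex.continuous_exp.comp (by fun_prop)).mul tent_continuous)]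
  have e1 : (∫ x in (-1:ℝ)..0, Complex.exp (c * x) * tent x)
      = ∫ x in (-1:ℝ)..0, (1 + (x:ℂ)) * Complex.exp (c * x) := by
    apply intervalIntegral.integral_congr
    intro x hx
    rw [Set.uIcc_of_le (by norm_num)] at hx
    have h1 : tent x = ((1 + x : ℝ) : ℂ) := by
      simp only [tent]
      congr 1
      rw [abs_of_nonpos hx.2]
      rw [max_eq_right (by linarith [hx.1])]
      ring
    show Complex.exp (c * x) * tent x = (1 + (x:ℂ)) * Complex.exp (c * x)
    rw [h1]
    push_cast
    ring
  have e2 : (∫ x in (0:ℝ)..1, Complex.exp (c * x) * tent x)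
      = ∫ x in (0:ℝ)..1, (1 - (x:ℂ)) * Complex.exp (c * x) := by
    apply intervalIntegral.integral_congr
    intro x hx
    rw [Set.uIcc_of_le (by norm_num)] at hx
    have h1 : tent x = ((1 - x : ℝ) : ℂ) := by
      simp only [tent]
      congr 1
      rw [_root_.abs_of_nonneg hx.1]
      rw [max_eq_right (by linarith [hx.2])]
    show Complex.exp (c * x) * tent x = (1 - (x:ℂ)) * Complex.exp (c * x)
    rw [h1]
    push_cast
    ring
  rw [e1, e2, piece1 c hc, piece2 c hc]
  have hexp : Complex.exp c + Complex.exp (-c) = 2 * Real.cos (2 * π * ξ) := by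
    have h1 : c = ((-(2 * π * ξ) : ℝ) : ℂ) * Complex.I := by rw [hcdef]; push_cast; ring
    have h2 : -c = ((2 * π * ξ : ℝ) : ℂ) * Complex.I := by rw [hcdef]; push_cast; ring
    rw [h2, h1, Complex.exp_mul_I, Complex.exp_mul_I]
    push_cast
    simp [Real.cos_neg, Real.sin_neg]
    ring
  have hc2 : c ^ 2 = ((-(4 * π ^ 2 * ξ ^ 2) : ℝ) : ℂ) := by
    rw [hcdef]
    push_cast
    rw [mul_pow, Complex.I_sq]
    ring
  have hstep : Complex.exp (-c) / c ^ 2 + 1 / c - 1 / c ^ 2 +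
      (Complex.exp c / c ^ 2 - 1 / c - 1 / c ^ 2)
      = (Complex.exp c + Complex.exp (-c) - 2) / c ^ 2 := by
    field_simp
    ring
  rw [hstep, hexp, hc2]
  have hden1 : ((-(4 * π ^ 2 * ξ ^ 2) : ℝ) : ℂ) ≠ 0 := by
    rw [Complex.ofReal_ne_zero]
    have : (0:ℝ) < 4 * π ^ 2 * ξ ^ 2 := by positivity
    linarith
  have hden2 : ((2 * π ^ 2 * ξ ^ 2 : ℝ) : ℂ) ≠ 0 := by
    rw [Complex.ofReal_ne_zero]
    positivity
  rw [show (((1 - Real.cos (2 * π * ξ)) / (2 * π ^ 2 * ξ ^ 2) : ℝ) : ℂ)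
      = ((1 - Real.cos (2 * π * ξ) : ℝ) : ℂ) / ((2 * π ^ 2 * ξ ^ 2 : ℝ) : ℂ) by push_cast; ring]
  rw [div_eq_div_iff hden1 hden2]
  push_cast
  ring

lemma integral_K : ∫ x : ℝ, K' x = π := by
  have K_integrable := K'_integrable
  have htent_int : Integrable tent := tent_continuous.integrable_of_hasCompactSupport
    tent_hasCompactSupport
  have hae0 : ∀ᵐ ξ : ℝ, ξ ≠ 0 := by
    refine ae_iff.mpr ?_
    simp only [ne_eq, not_not]
    convert Real.volume_singleton (a := 0) using 2
    rfl
  have hpt : ∀ ξ : ℝ, (((1 - Real.cos (2 * π * ξ)) / (2 * π ^ 2 * ξ ^ 2) : ℝ) : ℂ)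
      = ((2 * K' (2 * π * ξ) : ℝ) : ℂ) := by
    intro ξ
    rcases eq_or_ne ξ 0 with h | h
    · simp [h, K']
    · norm_cast
      rw [K']
      field_simp
  have hae : FourierTransform.fourier tent =ᵐ[volume]
      fun ξ : ℝ => ((2 * K' (2 * π * ξ) : ℝ) : ℂ) := by
    filter_upwards [hae0] with ξ hξ
    rw [fourier_tent ξ hξ, hpt ξ]
  have hKc : Integrable (fun ξ : ℝ => ((2 * K' (2 * π * ξ) : ℝ) : ℂ)) := by
    have h1 : Integrable (fun ξ : ℝ => K' (2 * π * ξ)) :=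
      K_integrable.comp_mul_left' (by positivity)
    exact (h1.const_mul 2).ofReal
  have hFint : Integrable (FourierTransform.fourier tent) := hKc.congr hae.symm
  have hinv := htent_int.fourierInv_fourier_eq hFint (tent_continuous.continuousAt (x := 0))
  have hinv0 : FourierTransformInv.fourierInv (FourierTransform.fourier tent) 0
      = ∫ ξ : ℝ, FourierTransform.fourier tent ξ := by
    rw [Real.fourierInv_eq']
    simp
  have htent0 : tent 0 = 1 := by simp [tent]
  rw [hinv0, htent0] at hinv
  rw [integral_congr_ae hae] at hinv
  have hcoe : ∫ a : ℝ, ((2 * K' (2 * π * a) : ℝ) : ℂ)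
      = ((∫ a : ℝ, 2 * K' (2 * π * a) : ℝ) : ℂ) := _root_.integral_ofReal
  rw [hcoe] at hinv
  have hreal : ∫ ξ : ℝ, 2 * K' (2 * π * ξ) = (1 / π) * ∫ x : ℝ, K' x := by
    rw [MeasureTheory.integral_const_mul]
    rw [MeasureTheory.Measure.integral_comp_mul_left K' (2 * π)]
    rw [abs_of_pos (by positivity)]
    rw [smul_eq_mul]
    field_simp
  rw [hreal] at hinv
  have : (1 / π) * ∫ x : ℝ, K' x = 1 := by exact_mod_cast hinv
  field_simp at this
  linarith


/-- Fejér-type kernel limit: for continuous compactly supported `g : ℝ → ℂ`,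
`lim_{t→∞} ∫ (1 − cos(tu))/(t u²) g(u) du = π g(0)`. -/
theorem fejer_kernel_limit (g : ℝ → ℂ) (hg : Continuous g) (hsupp : HasCompactSupport g) :
    Tendsto (fun t : ℝ =>
        ∫ u : ℝ, (((1 - Real.cos (t * u)) / (t * u ^ 2) : ℝ) : ℂ) * g u)
      atTop (nhds ((Real.pi : ℂ) * g 0)) := by
  obtain ⟨C, hC⟩ := hg.bounded_above_of_compact_support hsupp
  -- Step 2: dominated convergence for the substituted integral
  have step2 : Tendsto (fun t : ℝ => ∫ x : ℝ, ((K' x : ℂ) * g (x / t)))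
      atTop (nhds ((Real.pi : ℂ) * g 0)) := by
    have hlimval : ∫ x : ℝ, ((K' x : ℂ) * g 0) = (Real.pi : ℂ) * g 0 := by
      have : ∀ x : ℝ, (K' x : ℂ) * g 0 = (K' x) • g 0 := by
        intro x; rw [Complex.real_smul]
      simp_rw [this]
      rw [_root_.integral_smul_const, integral_K, Complex.real_smul]
    rw [← hlimval]
    apply MeasureTheory.tendsto_integral_filter_of_dominated_convergence (fun x => K' x * C)
    · filter_upwards with t
      exact ((Complex.measurable_ofReal.comp K'_meas).aestronglyMeasurable.mul
        ((hg.measurable.comp (measurable_id.div_const t)).aestronglyMeasurable))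
    · filter_upwards with t
      filter_upwards with x
      rw [norm_mul, Complex.norm_real, Real.norm_of_nonneg (K'_nonneg x)]
      exact mul_le_mul_of_nonneg_left (hC (x / t)) (K'_nonneg x)
    · exact K'_integrable.mul_const C
    · filter_upwards with x
      have h1 : Tendsto (fun t : ℝ => x / t) atTop (nhds 0) :=
        Tendsto.div_atTop tendsto_const_nhds tendsto_id
      have h2 : Tendsto (fun t : ℝ => g (x / t)) atTop (nhds (g 0)) :=
        (hg.continuousAt.tendsto).comp h1
      exact tendsto_const_nhds.mul h2
  -- Step 1: the two integrals agree for t > 0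
  apply step2.congr'
  filter_upwards [eventually_gt_atTop (0 : ℝ)] with t ht
  have ht' : t ≠ 0 := ne_of_gt ht
  have hsub := MeasureTheory.Measure.integral_comp_mul_left
    (fun x : ℝ => (K' x : ℂ) * g (x / t)) t
  have hlhs : (∫ x : ℝ, (K' (t * x) : ℂ) * g ((t * x) / t))
      = ∫ x : ℝ, (t : ℂ)⁻¹ * ((((1 - Real.cos (t * x)) / (t * x ^ 2) : ℝ) : ℂ) * g x) := by
    apply MeasureTheory.integral_congr_ae
    filter_upwards with x
    have hgx : (t * x) / t = x := by field_simp
    rw [hgx]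
    rcases eq_or_ne x 0 with h | h
    · simp [h, K']
    · have : K' (t * x) = (1 - Real.cos (t * x)) / (t ^ 2 * x ^ 2) := by
        rw [K']; ring_nf
      have hreal : K' (t * x) = t⁻¹ * ((1 - Real.cos (t * x)) / (t * x ^ 2)) := by
        rw [this]; field_simp
      rw [hreal]; push_cast; ring
  rw [hlhs] at hsub
  rw [MeasureTheory.integral_const_mul] at hsub
  have habs : |t⁻¹| = t⁻¹ := abs_of_pos (inv_pos.mpr ht)
  rw [habs] at hsub
  have hsmul : (t⁻¹ : ℝ) • (∫ y : ℝ, (K' y : ℂ) * g (y / t))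
      = (t : ℂ)⁻¹ * ∫ y : ℝ, (K' y : ℂ) * g (y / t) := by
    rw [Complex.real_smul]; push_cast; ring
  rw [hsmul] at hsub
  have hct : ((t : ℂ))⁻¹ ≠ 0 := inv_ne_zero (Complex.ofReal_ne_zero.mpr ht')
  exact (mul_left_cancel₀ hct hsub).symm
end

section
/- The matrix M(π) associated to a permutation is totally unimodular: for any permutation π of {1,…,n}, the (n+1)×(n+1) matrix M(π) defined by M_{ij} = 1 if π̃(j−1) < i ≤ π̃(j), M_{ij} = −1 if π̃(j) < i ≤ π̃(j−1), and 0 otherwise (where π̃ extends π by π̃(0)=0, π̃(n+1)=n+1), has all subdeterminants equal to 0, 1, or −1. In particular det M(π) = ±1 and M(π) is invertible over ℤ. -/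
/-!
Column `j` of `M(π)` is `1[i < π̃ (j+1)] - 1[i < π̃ j]`, a signed indicator of an interval of rows.
A square submatrix with its rows sorted still has this shape, and replacing each row `i` by
row `i` minus row `i+1` (a unitriangular operation) turns it into a matrix whose columns have at
most one `1` and at most one `-1`. Such a matrix has determinant `0` or `±1`: expand along a
column with at most one nonzero entry, and if there is none, every column sums to zero.
For the whole matrix the same row operation yields the incidence matrix of the path
`π̃ 0 → π̃ 1 → ⋯ → π̃ (n+1)`, which is the difference matrix itself with its rows permuted, so
`det M(π) = ±1`.
-/

/-- The extension `π̃` of a permutation `π` of `{1,…,n}` to `{0,1,…,n+1}` fixing `0`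
and `n+1` (represented as a function on `ℕ`, acting as the identity outside `[1,n]`;
internally `{1,…,n}` is identified with `Fin n` shifted by one). -/
def permExt (n : ℕ) (π : Equiv.Perm (Fin n)) : ℕ → ℕ := fun k =>
  if h : 1 ≤ k ∧ k ≤ n then (π ⟨k - 1, by omega⟩).val + 1 else k

/-- The `(n+1) × (n+1)` matrix `M(π)` (rows and columns indexed by `{1,…,n+1}`):
`M_{ij} = 1` if `π̃(j−1) < i ≤ π̃(j)`, `M_{ij} = −1` if `π̃(j) < i ≤ π̃(j−1)`, else `0`. -/
def permMatrix (n : ℕ) (π : Equiv.Perm (Fin n)) :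
    Matrix (Fin (n + 1)) (Fin (n + 1)) ℤ := fun i j =>
  if permExt n π j.val < i.val + 1 ∧ i.val + 1 ≤ permExt n π (j.val + 1) then 1
  else if permExt n π (j.val + 1) < i.val + 1 ∧ i.val + 1 ≤ permExt n π j.val then -1
  else 0

open Finset

theorem Monotone.lt_card_filter_lt_iff {α : Type*} [Preorder α] [DecidableLT α] {k : ℕ}
    {f : Fin k → α} (hf : Monotone f) (c : α) (i : Fin k) :
    (i : ℕ) < #{i' | f i' < c} ↔ f i < c := by
  constructor
  · intro hi
    by_contra hic
    have : #{i' | f i' < c} ≤ #(Finset.Iio i) := Finset.card_le_card fun i' hi' => by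
      simp only [Finset.mem_filter, Finset.mem_univ, true_and] at hi'
      exact Finset.mem_Iio.mpr (lt_of_not_ge fun h => hic ((hf h).trans_lt hi'))
    rw [Fin.card_Iio] at this
    omega
  · intro hic
    have : #(Finset.Iic i) ≤ #{i' | f i' < c} := Finset.card_le_card fun i' hi' => by
      simp only [Finset.mem_filter, Finset.mem_univ, true_and]
      exact (hf (Finset.mem_Iic.mp hi')).trans_lt hic
    rw [Fin.card_Iic] at this
    omega

namespace Matrix

variable {R m n : Type*} [CommRing R]

theorem det_mem_range_signType_cast_of_eq_ite_sub_ite {k : ℕ} (B : Matrix (Fin k) (Fin k) R)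
    (P Q : Fin k → Fin k → Prop) [∀ i j, Decidable (P i j)] [∀ i j, Decidable (Q i j)]
    (hP : ∀ j, {i | P i j}.Subsingleton) (hQ : ∀ j, {i | Q i j}.Subsingleton)
    (hB : ∀ i j, B i j = (if P i j then 1 else 0) - (if Q i j then 1 else 0)) :
    B.det ∈ Set.range SignType.cast := by
  induction k with
  | zero => exact ⟨1, by simp⟩
  | succ k ih =>
    by_cases hcol : ∃ j i, ∀ i' ≠ i, B i' j = 0
    · obtain ⟨j, i, hj⟩ := hcol
      have hentry : B i j ∈ Set.range SignType.cast := by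
        rw [hB]
        split_ifs
        · exact ⟨0, by simp⟩
        · exact ⟨1, by simp⟩
        · exact ⟨-1, by simp⟩
        · exact ⟨0, by simp⟩
      have hminor := ih (B.submatrix i.succAbove j.succAbove)
        (fun i' j' => P (i.succAbove i') (j.succAbove j'))
        (fun i' j' => Q (i.succAbove i') (j.succAbove j'))
        (fun _ => (hP _).preimage Fin.succAbove_right_injective)
        (fun _ => (hQ _).preimage Fin.succAbove_right_injective)
        (fun _ _ => hB _ _)
      rw [det_succ_column B j, Fintype.sum_eq_single i fun i' hi' => by simp [hj i' hi']]
      change _ ∈ MonoidHom.mrange SignType.castHom.toMonoidHom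
      refine mul_mem (mul_mem (pow_mem ?_ _) hentry) hminor
      exact ⟨-1, by simp⟩
    · push Not at hcol
      -- each column then contains both a `1` and a `-1`, so it sums to zero
      have hPQ (j) : (∃ a, P a j) ∧ ∃ b, Q b j := by
        obtain ⟨i₁, -, h₁⟩ := hcol j 0
        obtain ⟨i₂, h₂₁, h₂⟩ := hcol j i₁
        constructor <;> by_contra! hn
        · exact h₂₁ (hQ j (by_contra fun h => h₂ (by simp_all))
            (by_contra fun h => h₁ (by simp_all)))
        · exact h₂₁ (hP j (by_contra fun h => h₂ (by simp_all))
            (by_contra fun h => h₁ (by simp_all)))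
      have hsum (j) : ∑ i, B i j = 0 := by
        obtain ⟨⟨a, ha⟩, ⟨b, hb⟩⟩ := hPQ j
        simp only [hB, Finset.sum_sub_distrib]
        rw [Fintype.sum_eq_single a fun i hi => if_neg fun h : P i j => hi (hP j h ha),
          Fintype.sum_eq_single b fun i hi => if_neg fun h : Q i j => hi (hQ j h hb),
          if_pos ha, if_pos hb, sub_self]
      refine ⟨0, ?_⟩
      rw [det_eq_sum_column_mul_submatrix_succAbove_succAbove_det B 0 0 fun j _ => hsum j,
        hsum, mul_zero, zero_mul, SignType.coe_zero]

/-- Row `i` of `fwdDiffMatrix k * X` is `X i - X (i + 1)`, where `X k = 0`. -/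
def fwdDiffMatrix (k : ℕ) : Matrix (Fin k) (Fin k) R :=
  of fun i j => (if (i : ℕ) = j then 1 else 0) - (if (i : ℕ) + 1 = j then 1 else 0)

theorem det_fwdDiffMatrix (k : ℕ) : (fwdDiffMatrix k : Matrix (Fin k) (Fin k) R).det = 1 := by
  rw [det_of_isUpperTriangular fun i j (hij : j < i) => ?_]
  · exact Finset.prod_eq_one fun i _ => by simp [fwdDiffMatrix]
  · have : (i : ℕ) ≠ j ∧ (i : ℕ) + 1 ≠ j := by omega
    simp [fwdDiffMatrix, this]

theorem fwdDiffMatrix_mul_apply_of_eq_lt_sub_lt {k : ℕ} {X : Matrix (Fin k) n R}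
    {a b : n → ℕ} (ha : ∀ j, a j ≤ k) (hb : ∀ j, b j ≤ k)
    (hX : ∀ i j, X i j = (if (i : ℕ) < b j then 1 else 0) - (if (i : ℕ) < a j then 1 else 0))
    (i : Fin k) (j : n) :
    ((fwdDiffMatrix k : Matrix (Fin k) (Fin k) R) * X) i j =
      (if (i : ℕ) + 1 = b j then 1 else 0) - (if (i : ℕ) + 1 = a j then 1 else 0) := by
  simp only [mul_apply, fwdDiffMatrix, of_apply, hX]
  rw [Fin.sum_univ_eq_sum_range fun s =>
    ((if (i : ℕ) = s then 1 else 0) - (if (i : ℕ) + 1 = s then 1 else 0)) *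
      ((if s < b j then (1 : R) else 0) - (if s < a j then 1 else 0))]
  simp only [sub_mul, ite_mul, one_mul, zero_mul, Finset.sum_sub_distrib, Finset.sum_ite_eq,
    Finset.mem_range]
  have := ha j; have := hb j; have := i.isLt
  split_ifs <;> first | omega | ring

theorem det_mem_range_signType_cast_of_eq_lt_sub_lt {k : ℕ} (B : Matrix (Fin k) (Fin k) R)
    (a b : Fin k → ℕ)
    (hB : ∀ i j, B i j = (if (i : ℕ) < b j then 1 else 0) - (if (i : ℕ) < a j then 1 else 0)) :
    B.det ∈ Set.range SignType.cast := by
  have hB' (i j) : B i j =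
      (if (i : ℕ) < min (b j) k then 1 else 0) - (if (i : ℕ) < min (a j) k then 1 else 0) := by
    simp only [hB, lt_min_iff, i.isLt, and_true]
  have hsub (c : Fin k → ℕ) (j) : {i : Fin k | (i : ℕ) + 1 = min (c j) k}.Subsingleton :=
    fun i₁ (h₁ : (i₁ : ℕ) + 1 = _) i₂ (h₂ : (i₂ : ℕ) + 1 = _) => Fin.ext (by omega)
  have hdiff := det_mem_range_signType_cast_of_eq_ite_sub_ite _ _ _ (hsub b) (hsub a)
    (fwdDiffMatrix_mul_apply_of_eq_lt_sub_lt (fun _ => min_le_right _ _)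
      (fun _ => min_le_right _ _) hB')
  rwa [det_mul, det_fwdDiffMatrix, one_mul] at hdiff

theorem isTotallyUnimodular_of_det_submatrix_strictMono [LinearOrder m] {A : Matrix m n R}
    (hA : ∀ k (f : Fin k → m) (g : Fin k → n), StrictMono f →
      (A.submatrix f g).det ∈ Set.range SignType.cast) :
    A.IsTotallyUnimodular := by
  intro k f g hf _
  set σ := Tuple.sort f
  have hsorted := hA k (f ∘ σ) g
    ((Tuple.monotone_sort f).strictMono_of_injective (hf.comp σ.injective))
  rw [show A.submatrix (f ∘ σ) g = (A.submatrix f g).submatrix σ id from rfl, det_permute]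
    at hsorted
  rcases Int.units_eq_one_or (Equiv.Perm.sign σ) with hσ | hσ
  · simpa [hσ] using hsorted
  · obtain ⟨s, hs⟩ := hsorted
    exact ⟨-s, by simp [hσ] at hs; simp [hs]⟩

theorem isTotallyUnimodular_of_eq_lt_sub_lt {N : ℕ} (X : Matrix (Fin N) n R) (a b : n → ℕ)
    (hX : ∀ i j, X i j = (if (i : ℕ) < b j then 1 else 0) - (if (i : ℕ) < a j then 1 else 0)) :
    X.IsTotallyUnimodular := by
  refine isTotallyUnimodular_of_det_submatrix_strictMono fun k f g hf => ?_
  have hfv : Monotone fun i => (f i : ℕ) := hf.monotone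
  refine det_mem_range_signType_cast_of_eq_lt_sub_lt _ (fun j => #{i | (f i : ℕ) < a (g j)})
    (fun j => #{i | (f i : ℕ) < b (g j)}) fun i j => ?_
  simp only [submatrix_apply, hX, hfv.lt_card_filter_lt_iff]

end Matrix

theorem permExt_le {n : ℕ} (π : Equiv.Perm (Fin n)) {k : ℕ} (hk : k ≤ n + 1) :
    permExt n π k ≤ n + 1 := by
  unfold permExt
  split_ifs with h
  · have := (π ⟨k - 1, by omega⟩).isLt
    omega
  · exact hk

theorem permExt_injective (n : ℕ) (π : Equiv.Perm (Fin n)) : Function.Injective (permExt n π) := by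
  intro x y h
  unfold permExt at h
  split_ifs at h with hx hy hy
  · have := Fin.mk.inj (π.injective (Fin.ext (Nat.succ_injective h)))
    omega
  · have := (π ⟨x - 1, by omega⟩).isLt
    omega
  · have := (π ⟨y - 1, by omega⟩).isLt
    omega
  · exact h

theorem exists_perm_val_succ_eq_permExt (n : ℕ) (π : Equiv.Perm (Fin n)) :
    ∃ τ : Equiv.Perm (Fin (n + 1)), ∀ j, (τ j : ℕ) + 1 = permExt n π (j + 1) := by
  have hpos (j : Fin (n + 1)) : 1 ≤ permExt n π (j + 1) := by
    unfold permExt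
    split_ifs <;> omega
  let τ (j : Fin (n + 1)) : Fin (n + 1) :=
    ⟨permExt n π (j + 1) - 1, by have := permExt_le π (k := j + 1) j.isLt; omega⟩
  have hτ : Function.Injective τ := fun i j h => by
    have h' : permExt n π (i + 1) = permExt n π (j + 1) := by
      have := hpos i; have := hpos j; have := Fin.val_eq_of_eq h
      simp only [τ] at this
      omega
    exact Fin.ext (by have := permExt_injective n π h'; omega)
  exact ⟨Equiv.ofBijective τ (Finite.injective_iff_bijective.mp hτ),
    fun j => by have := hpos j; simp [τ]; omega⟩

theorem permMatrix_apply (n : ℕ) (π : Equiv.Perm (Fin n)) (i j : Fin (n + 1)) :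
    permMatrix n π i j = (if (i : ℕ) < permExt n π (j + 1) then 1 else 0) -
      (if (i : ℕ) < permExt n π j then 1 else 0) := by
  unfold permMatrix
  split_ifs <;> omega

theorem det_permMatrix (n : ℕ) (π : Equiv.Perm (Fin n)) :
    (permMatrix n π).det = 1 ∨ (permMatrix n π).det = -1 := by
  obtain ⟨τ, hτ⟩ := exists_perm_val_succ_eq_permExt n π
  have hD : (Matrix.fwdDiffMatrix (n + 1) * permMatrix n π).submatrix τ id =
      Matrix.fwdDiffMatrix (n + 1) := by
    ext i j
    rw [Matrix.submatrix_apply, Matrix.fwdDiffMatrix_mul_apply_of_eq_lt_sub_lt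
      (fun j => permExt_le π (by omega)) (fun j => permExt_le π j.isLt) (permMatrix_apply n π)]
    simp [hτ, (permExt_injective n π).eq_iff, Matrix.fwdDiffMatrix]
  have h := congrArg Matrix.det hD
  rw [Matrix.det_permute, Matrix.det_mul, Matrix.det_fwdDiffMatrix, one_mul] at h
  rcases Int.units_eq_one_or (Equiv.Perm.sign τ) with hσ | hσ <;> simp [hσ] at h <;> omega

/-- `M(π)` is totally unimodular: all subdeterminants are `0` or `±1`; in particular
`det M(π) = ±1` and `M(π)` is invertible over `ℤ`. -/
theorem permMatrix_totallyUnimodular (n : ℕ) (π : Equiv.Perm (Fin n)) :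
    (permMatrix n π).IsTotallyUnimodular ∧
    ((permMatrix n π).det = 1 ∨ (permMatrix n π).det = -1) ∧
    IsUnit (permMatrix n π) := by
  have hdet := det_permMatrix n π
  refine ⟨Matrix.isTotallyUnimodular_of_eq_lt_sub_lt _ _ _ (permMatrix_apply n π), hdet, ?_⟩
  rwa [Matrix.isUnit_iff_isUnit_det, Int.isUnit_iff]
end

section
/- Breaking lumps into high-degree pairings: let B = {B₁, B₂, …} be a partition of {1,…,n} and set s(B) := (1/2) Σ{|B_j| : |B_j| ≥ 4}. Then there exists a permutation π ∈ S_n compatible with B such that deg(π) ≥ s(B)/2. -/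
/-- `(j, π(j))` is a peak: `π(j) < min{π̃(j−1), π̃(j+1)}`
(here `j : Fin n` represents the index `j+1 ∈ {1,…,n}`). -/
def IsPeak (n : ℕ) (π : Equiv.Perm (Fin n)) (j : Fin n) : Prop :=
  permExt n π (j.val + 1) < min (permExt n π j.val) (permExt n π (j.val + 2))

/-- `(j, π(j))` is a valley: `π(j) > max{π̃(j−1), π̃(j+1)}`. -/
def IsValley (n : ℕ) (π : Equiv.Perm (Fin n)) (j : Fin n) : Prop :=
  max (permExt n π j.val) (permExt n π (j.val + 2)) < permExt n π (j.val + 1)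

/-- `(j, π(j))` is a ladder: `π(j) − 1 ∈ {π̃(j−1), π̃(j+1)}` and it is not a valley. -/
def IsLadder (n : ℕ) (π : Equiv.Perm (Fin n)) (j : Fin n) : Prop :=
  (permExt n π (j.val + 1) = permExt n π j.val + 1 ∨
    permExt n π (j.val + 1) = permExt n π (j.val + 2) + 1) ∧ ¬ IsValley n π j

/-- `(j, π(j))` is a slope: neither a peak, a valley, nor a ladder. -/
def IsSlope (n : ℕ) (π : Equiv.Perm (Fin n)) (j : Fin n) : Prop :=
  ¬ IsPeak n π j ∧ ¬ IsValley n π j ∧ ¬ IsLadder n π j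

instance (n : ℕ) (π : Equiv.Perm (Fin n)) : DecidablePred (IsPeak n π) :=
  fun _ => inferInstanceAs (Decidable (_ < _))

instance (n : ℕ) (π : Equiv.Perm (Fin n)) : DecidablePred (IsValley n π) :=
  fun _ => inferInstanceAs (Decidable (_ < _))

instance (n : ℕ) (π : Equiv.Perm (Fin n)) : DecidablePred (IsLadder n π) :=
  fun _ => inferInstanceAs (Decidable (_ ∧ _))

instance (n : ℕ) (π : Equiv.Perm (Fin n)) : DecidablePred (IsSlope n π) :=
  fun _ => inferInstanceAs (Decidable (_ ∧ _))

/-- The degree of a permutation: `deg(π) = n − ℓ(π)` where `ℓ(π)` is the number of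
ladder indices. -/
def permDeg (n : ℕ) (π : Equiv.Perm (Fin n)) : ℕ :=
  n - (Finset.univ.filter fun j : Fin n => IsLadder n π j).card

/-!
Average over the permutations `π` preserving every block. Fix a position `j` in a block `b`
with `|b| ≥ 4`. Resampling `π` on `b`, i.e. replacing it by `g * π` with `g` uniform among the
permutations supported in `b`, makes `π j` uniform on `b`, and makes `(π j, π i)`, for another
`i ∈ b`, uniform on the ordered pairs of distinct elements of `b`. A ladder at `j` forces
`π j - 1` to be the value at one of the two neighbours of `j`. Each of these two events has
probability at most `1/|b|`: a neighbour outside `b` carries a value not depending on `g`, and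
a neighbour in `b` gives at most `|b| - 1` of the `|b| (|b| - 1)` pairs. So `j` is a ladder
with probability at most `2/|b| ≤ 1/2`, and some `π` has at most half of the positions lying
in large blocks as ladders.
-/

open Finset Equiv

namespace LumpBreakup

section Translates

variable {G : Type*} [Group G]

theorem card_filter_mul_left_eq {S : Finset G} {h : G} (hS : ∀ x, h * x ∈ S ↔ x ∈ S)
    (p : G → Prop) [DecidablePred p] : #{x ∈ S | p (h * x)} = #{x ∈ S | p x} := by
  refine card_nbij' (h * ·) (h⁻¹ * ·) (fun x hx => ?_) (fun x hx => ?_) (fun x _ => ?_)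
    fun x _ => ?_
  · rw [mem_coe, mem_filter] at hx ⊢
    exact ⟨(hS x).2 hx.1, hx.2⟩
  · rw [mem_coe, mem_filter] at hx ⊢
    rw [mul_inv_cancel_left]
    exact ⟨(hS _).1 (by rw [mul_inv_cancel_left]; exact hx.1), hx.2⟩
  · exact inv_mul_cancel_left h x
  · exact mul_inv_cancel_left h x

theorem card_filter_mem_eq_mul {β : Type*} [DecidableEq β] {S : Finset G} (φ : G → β)
    {P : Finset β} {p₀ : β}
    (htrans : ∀ p ∈ P, ∃ h : G, (∀ x, h * x ∈ S ↔ x ∈ S) ∧ ∀ x, φ (h * x) = p ↔ φ x = p₀) :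
    #{x ∈ S | φ x ∈ P} = #P * #{x ∈ S | φ x = p₀} := by
  rw [card_eq_sum_card_fiberwise (s := {x ∈ S | φ x ∈ P}) (t := P) (f := φ)
    fun x hx => (mem_filter.1 hx).2]
  refine sum_const_nat fun p hp => ?_
  obtain ⟨h, hS, hφ⟩ := htrans p hp
  calc #{x ∈ {x ∈ S | φ x ∈ P} | φ x = p} = #{x ∈ S | φ x = p} := by
        rw [filter_filter]
        exact congrArg card (filter_congr fun x _ => and_iff_right_of_imp fun hx => hx ▸ hp)
    _ = #{x ∈ S | φ (h * x) = p} := (card_filter_mul_left_eq hS _).symm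
    _ = #{x ∈ S | φ x = p₀} := by simp only [hφ]

theorem mul_card_filter_le_of_translates {S T : Finset G} (hT : T.Nonempty)
    (hTS : ∀ g ∈ T, ∀ x, g * x ∈ S ↔ x ∈ S) {p : G → Prop} [DecidablePred p] {k m : ℕ}
    (h : ∀ x ∈ S, k * #{g ∈ T | p (g * x)} ≤ m * #T) :
    k * #{x ∈ S | p x} ≤ m * #S := by
  have hcount : #T * #{x ∈ S | p x} = ∑ x ∈ S, #{g ∈ T | p (g * x)} :=
    calc #T * #{x ∈ S | p x} = ∑ g ∈ T, #{x ∈ S | p (g * x)} :=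
          (sum_const_nat fun g hg => card_filter_mul_left_eq (hTS g hg) p).symm
      _ = ∑ x ∈ S, #{g ∈ T | p (g * x)} := by
          simp only [card_filter]
          exact sum_comm
  refine Nat.le_of_mul_le_mul_left ?_ hT.card_pos
  calc #T * (k * #{x ∈ S | p x}) = ∑ x ∈ S, k * #{g ∈ T | p (g * x)} := by
        rw [mul_left_comm, hcount, mul_sum]
    _ ≤ ∑ _x ∈ S, m * #T := sum_le_sum h
    _ = #T * (m * #S) := by rw [sum_const, smul_eq_mul]; ring

end Translates

theorem exists_mul_card_filter_le {ι κ : Type*} {S : Finset ι} {J : Finset κ} (hS : S.Nonempty)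
    (r : ι → κ → Prop) [∀ x j, Decidable (r x j)] {k m : ℕ}
    (h : ∀ j ∈ J, k * #{x ∈ S | r x j} ≤ m * #S) :
    ∃ x ∈ S, k * #{j ∈ J | r x j} ≤ m * #J := by
  refine exists_le_of_sum_le hS ?_
  calc ∑ x ∈ S, k * #{j ∈ J | r x j} = ∑ j ∈ J, k * #{x ∈ S | r x j} := by
        simp only [card_filter, mul_sum]
        exact sum_comm
    _ ≤ ∑ _j ∈ J, m * #S := sum_le_sum h
    _ = ∑ _x ∈ S, m * #J := by simp only [sum_const, smul_eq_mul]; ring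

section SupportedIn

variable {α : Type*} [Fintype α] [DecidableEq α] {b : Finset α} {g h : Perm α} {u v x y : α}

def supportedIn (b : Finset α) : Finset (Perm α) := {g | g.support ⊆ b}

theorem mem_supportedIn : g ∈ supportedIn b ↔ g.support ⊆ b := by
  simp [supportedIn]

theorem apply_eq_of_mem_supportedIn (hg : g ∈ supportedIn b) (hx : x ∉ b) : g x = x :=
  Perm.notMem_support.1 fun hxs => hx (mem_supportedIn.1 hg hxs)

theorem apply_mem_of_mem_supportedIn (hg : g ∈ supportedIn b) (hx : x ∈ b) : g x ∈ b := by
  by_cases hxs : x ∈ g.support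
  · exact mem_supportedIn.1 hg (Perm.apply_mem_support.2 hxs)
  · rwa [Perm.notMem_support.1 hxs]

theorem mul_mem_supportedIn (hg : g ∈ supportedIn b) (hh : h ∈ supportedIn b) :
    g * h ∈ supportedIn b :=
  mem_supportedIn.2 <| (Perm.support_mul_le g h).trans <|
    union_subset (mem_supportedIn.1 hg) (mem_supportedIn.1 hh)

theorem inv_mem_supportedIn (hg : g ∈ supportedIn b) : g⁻¹ ∈ supportedIn b := by
  rwa [mem_supportedIn, Perm.support_inv, ← mem_supportedIn]

theorem mul_mem_supportedIn_iff (hg : g ∈ supportedIn b) :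
    g * h ∈ supportedIn b ↔ h ∈ supportedIn b :=
  ⟨fun hgh => by simpa using mul_mem_supportedIn (inv_mem_supportedIn hg) hgh,
    mul_mem_supportedIn hg⟩

theorem swap_mem_supportedIn (hx : x ∈ b) (hy : y ∈ b) : swap x y ∈ supportedIn b := by
  refine mem_supportedIn.2 fun z hz => ?_
  by_contra hzb
  exact Perm.mem_support.1 hz <|
    swap_apply_of_ne_of_ne (by rintro rfl; exact hzb hx) (by rintro rfl; exact hzb hy)

theorem exists_mem_supportedIn_apply_eq_apply_eq (hu : u ∈ b) (hv : v ∈ b) (huv : u ≠ v)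
    (hx : x ∈ b) (hy : y ∈ b) (hxy : x ≠ y) :
    ∃ h ∈ supportedIn b, h u = x ∧ h v = y := by
  set w := swap u x v
  have hwx : w ≠ x := fun hw =>
    huv ((swap u x).injective (hw.trans (swap_apply_left u x).symm)).symm
  have hw : w ∈ b := apply_mem_of_mem_supportedIn (swap_mem_supportedIn hu hx) hv
  refine ⟨swap w y * swap u x,
    mul_mem_supportedIn (swap_mem_supportedIn hw hy) (swap_mem_supportedIn hu hx), ?_, ?_⟩
  · rw [Perm.mul_apply, swap_apply_left, swap_apply_of_ne_of_ne hwx.symm hxy]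
  · exact swap_apply_left w y

theorem card_filter_apply_mem (hu : u ∈ b) {Q : Finset α} (hQ : Q ⊆ b) :
    #{g ∈ supportedIn b | g u ∈ Q} = #Q * #{g ∈ supportedIn b | g u = u} :=
  card_filter_mem_eq_mul (fun g => g u) fun x hx =>
    ⟨swap u x, fun _ => mul_mem_supportedIn_iff (swap_mem_supportedIn hu (hQ hx)), fun _ =>
      (swap u x).injective.eq_iff' (swap_apply_left u x)⟩

theorem card_filter_apply_pair_mem (hu : u ∈ b) (hv : v ∈ b) (huv : u ≠ v)
    {P : Finset (α × α)} (hP : P ⊆ b.offDiag) :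
    #{g ∈ supportedIn b | (g u, g v) ∈ P} = #P * #{g ∈ supportedIn b | (g u, g v) = (u, v)} :=
  card_filter_mem_eq_mul (fun g : Perm α => (g u, g v)) fun ⟨x, y⟩ hxy => by
    obtain ⟨hx, hy, hxy⟩ := mem_offDiag.1 (hP hxy)
    obtain ⟨h, hh, rfl, rfl⟩ := exists_mem_supportedIn_apply_eq_apply_eq hu hv huv hx hy hxy
    exact ⟨h, fun _ => mul_mem_supportedIn_iff hh, fun g => by simp⟩

end SupportedIn

section ValueCounts

variable {n : ℕ} {b : Finset (Fin n)} {u v : Fin n}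

theorem card_mul_card_filter_val_eq_le (hu : u ∈ b) (c : ℕ) :
    #b * #{g ∈ supportedIn b | (g u).val = c} ≤ #(supportedIn b) := by
  set f := #{g ∈ supportedIn b | g u = u}
  set Q := {x ∈ b | x.val = c}
  have hQ : #Q ≤ 1 := card_le_one.2 fun x hx y hy => Fin.ext <| by
    rw [(mem_filter.1 hx).2, (mem_filter.1 hy).2]
  have hlevel : #{g ∈ supportedIn b | (g u).val = c} = #Q * f := by
    rw [← card_filter_apply_mem hu (filter_subset _ _)]
    exact congrArg card <| filter_congr fun g hg => by
      simp only [mem_filter, apply_mem_of_mem_supportedIn hg hu, true_and]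
  have htotal : #(supportedIn b) = #b * f := by
    rw [← card_filter_apply_mem hu subset_rfl,
      filter_true_of_mem fun g hg => apply_mem_of_mem_supportedIn hg hu]
  rw [hlevel, htotal]
  exact Nat.mul_le_mul_left _ (by simpa using Nat.mul_le_mul_right f hQ)

theorem card_mul_card_filter_val_eq_val_add_one_le (hu : u ∈ b) (hv : v ∈ b) (huv : u ≠ v) :
    #b * #{g ∈ supportedIn b | (g u).val = (g v).val + 1} ≤ #(supportedIn b) := by
  set f := #{g ∈ supportedIn b | (g u, g v) = (u, v)}
  set P := {p ∈ b.offDiag | p.1.val = p.2.val + 1}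
  have hb : b.Nonempty := ⟨u, hu⟩
  have hP : #P ≤ #b - 1 := by
    rw [← card_erase_of_mem (min'_mem b hb)]
    refine card_le_card_of_injOn Prod.fst (fun p hp => ?_) fun p hp q hq hpq => ?_
    · obtain ⟨hp, hpv⟩ := mem_filter.1 hp
      obtain ⟨hp₁, hp₂, -⟩ := mem_offDiag.1 hp
      refine mem_erase.2 ⟨fun h => ?_, hp₁⟩
      have := min'_le b _ hp₂
      rw [← h, Fin.le_iff_val_le_val] at this
      omega
    · have hp := (mem_filter.1 hp).2
      have hq := (mem_filter.1 hq).2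
      exact Prod.ext hpq (Fin.ext (by rw [hpq] at hp; omega))
  have hlevel : #{g ∈ supportedIn b | (g u).val = (g v).val + 1} = #P * f := by
    rw [← card_filter_apply_pair_mem hu hv huv (filter_subset _ _)]
    exact congrArg card <| filter_congr fun g hg => by
      have hgu := apply_mem_of_mem_supportedIn hg hu
      have hgv := apply_mem_of_mem_supportedIn hg hv
      simp only [mem_filter, mem_offDiag, hgu, hgv, true_and, iff_and_self]
      exact fun h => Fin.ne_of_val_ne (by omega)
  have htotal : #(supportedIn b) = (#b * #b - #b) * f := by
    rw [← offDiag_card, ← card_filter_apply_pair_mem hu hv huv subset_rfl,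
      filter_true_of_mem fun g hg => mem_offDiag.2 ⟨apply_mem_of_mem_supportedIn hg hu,
        apply_mem_of_mem_supportedIn hg hv, g.injective.ne huv⟩]
  rw [hlevel, htotal, ← mul_assoc, ← Nat.mul_sub_one]
  exact Nat.mul_le_mul_right _ (Nat.mul_le_mul_left _ hP)

end ValueCounts

section Compatible

variable {α : Type*} [Fintype α] [DecidableEq α] {B : Finpartition (univ : Finset α)}
  {b : Finset α} {g π : Perm α} {i : α}

def compatiblePerms (B : Finpartition (univ : Finset α)) : Finset (Perm α) :=
  {π | ∀ b ∈ B.parts, ∀ i ∈ b, π i ∈ b}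

theorem mem_compatiblePerms : π ∈ compatiblePerms B ↔ ∀ b ∈ B.parts, ∀ i ∈ b, π i ∈ b := by
  simp [compatiblePerms]

theorem apply_notMem_of_mem_compatiblePerms (hπ : π ∈ compatiblePerms B) (hb : b ∈ B.parts)
    (hi : i ∉ b) : π i ∉ b := by
  obtain ⟨b', hb', hib'⟩ := B.exists_mem (mem_univ i)
  exact disjoint_left.1 (B.disjoint hb' hb fun h => hi (h ▸ hib'))
    (mem_compatiblePerms.1 hπ b' hb' i hib')

theorem mul_mem_compatiblePerms (hb : b ∈ B.parts) (hg : g ∈ supportedIn b)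
    (hπ : π ∈ compatiblePerms B) : g * π ∈ compatiblePerms B := by
  refine mem_compatiblePerms.2 fun b' hb' i hi => ?_
  have hπi := mem_compatiblePerms.1 hπ b' hb' i hi
  rw [Perm.mul_apply]
  by_cases hbb' : b' = b
  · subst hbb'
    exact apply_mem_of_mem_supportedIn hg hπi
  · rwa [apply_eq_of_mem_supportedIn hg (disjoint_left.1 (B.disjoint hb' hb hbb') hπi)]

theorem mul_mem_compatiblePerms_iff (hb : b ∈ B.parts) (hg : g ∈ supportedIn b) :
    g * π ∈ compatiblePerms B ↔ π ∈ compatiblePerms B :=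
  ⟨fun h => by simpa using mul_mem_compatiblePerms hb (inv_mem_supportedIn hg) h,
    mul_mem_compatiblePerms hb hg⟩

end Compatible

section Ladders

variable {n : ℕ} {B : Finpartition (univ : Finset (Fin n))} {b : Finset (Fin n)}
  {π σ : Perm (Fin n)} {j : Fin n}

theorem permExt_val_add_one (σ : Perm (Fin n)) (j : Fin n) :
    permExt n σ (j.val + 1) = (σ j).val + 1 := by
  rw [permExt, dif_pos ⟨by omega, j.isLt⟩]
  rfl

theorem IsLadder.val_eq (h : IsLadder n σ j) :
    (σ j).val = permExt n σ j.val ∨ (σ j).val = permExt n σ (j.val + 2) := by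
  rw [IsLadder, permExt_val_add_one] at h
  omega

theorem card_mul_card_filter_val_eq_permExt_le (hb : b ∈ B.parts) (hj : j ∈ b)
    (hπ : π ∈ compatiblePerms B) {k : ℕ} (hk : k ≠ j.val + 1) :
    #b * #{g ∈ supportedIn b | ((g * π) j).val = permExt n (g * π) k} ≤ #(supportedIn b) := by
  have hu : π j ∈ b := mem_compatiblePerms.1 hπ b hb j hj
  by_cases hkn : 1 ≤ k ∧ k ≤ n
  · obtain ⟨i, rfl⟩ : ∃ i : Fin n, k = i.val + 1 := ⟨⟨k - 1, by omega⟩, by simp; omega⟩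
    have hij : π i ≠ π j := π.injective.ne (by rintro rfl; exact hk rfl)
    simp only [permExt_val_add_one, Perm.mul_apply]
    by_cases hi : i ∈ b
    · exact card_mul_card_filter_val_eq_val_add_one_le hu (mem_compatiblePerms.1 hπ b hb i hi)
        hij.symm
    · have hπi := apply_notMem_of_mem_compatiblePerms hπ hb hi
      convert card_mul_card_filter_val_eq_le hu ((π i).val + 1) using 4 with g hg
      rw [apply_eq_of_mem_supportedIn hg hπi]
  · simp only [permExt, dif_neg hkn]
    exact card_mul_card_filter_val_eq_le hu k

theorem two_mul_card_filter_isLadder_mul_le (hb : b ∈ B.parts) (hb4 : 4 ≤ #b) (hj : j ∈ b)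
    (hπ : π ∈ compatiblePerms B) :
    2 * #{g ∈ supportedIn b | IsLadder n (g * π) j} ≤ #(supportedIn b) := by
  have hsub : {g ∈ supportedIn b | IsLadder n (g * π) j} ⊆
      {g ∈ supportedIn b | ((g * π) j).val = permExt n (g * π) j.val} ∪
        {g ∈ supportedIn b | ((g * π) j).val = permExt n (g * π) (j.val + 2)} := by
    intro g hg
    rw [mem_filter] at hg
    rw [mem_union, mem_filter, mem_filter]
    exact (IsLadder.val_eq hg.2).imp (⟨hg.1, ·⟩) (⟨hg.1, ·⟩)
  have hleft := card_mul_card_filter_val_eq_permExt_le hb hj hπ (k := j.val) (by omega)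
  have hright := card_mul_card_filter_val_eq_permExt_le hb hj hπ (k := j.val + 2) (by omega)
  have hcard := (card_le_card hsub).trans (card_union_le _ _)
  have h4 := Nat.mul_le_mul_right #{g ∈ supportedIn b | IsLadder n (g * π) j} hb4
  have hb' := Nat.mul_le_mul_left #b hcard
  rw [mul_add] at hb'
  omega

theorem two_mul_card_filter_isLadder_le (hb : b ∈ B.parts) (hb4 : 4 ≤ #b) (hj : j ∈ b) :
    2 * #{π ∈ compatiblePerms B | IsLadder n π j} ≤ #(compatiblePerms B) := by
  simpa using mul_card_filter_le_of_translates ⟨1, mem_supportedIn.2 (by simp)⟩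
    (fun g hg _ => mul_mem_compatiblePerms_iff hb hg) (k := 2) (m := 1)
    fun π hπ => by simpa using two_mul_card_filter_isLadder_mul_le hb hb4 hj hπ

end Ladders

end LumpBreakup

open LumpBreakup in
/-- Breaking lumps into high-degree pairings: for any partition `B` of `{1,…,n}`,
with `s(B) = (1/2) Σ {|B_j| : |B_j| ≥ 4}`, there is a permutation `π` compatible with
`B` (i.e. mapping each block into itself) such that `deg(π) ≥ s(B)/2`, i.e.
`Σ {|B_j| : |B_j| ≥ 4} ≤ 4 deg(π)`. -/
theorem lump_breakup (n : ℕ) (B : Finpartition (Finset.univ : Finset (Fin n))) :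
    ∃ π : Equiv.Perm (Fin n),
      (∀ b ∈ B.parts, ∀ i ∈ b, π i ∈ b) ∧
      (∑ b ∈ B.parts.filter fun b => 4 ≤ b.card, b.card) ≤ 4 * permDeg n π := by
  set big := (B.parts.filter fun b => 4 ≤ b.card).biUnion id
  have hbig : #big = ∑ b ∈ B.parts.filter fun b => 4 ≤ b.card, b.card :=
    card_biUnion fun b hb b' hb' => B.disjoint (mem_filter.1 hb).1 (mem_filter.1 hb').1
  obtain ⟨π, hπ, hladders⟩ := exists_mul_card_filter_le (J := big)
    ⟨1, mem_compatiblePerms.2 fun _ _ _ => id⟩ (IsLadder n) (k := 2) (m := 1)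
    fun j hj => by
      obtain ⟨b, hb, hjb⟩ := mem_biUnion.1 hj
      simpa using two_mul_card_filter_isLadder_le (mem_filter.1 hb).1 (mem_filter.1 hb).2 hjb
  refine ⟨π, mem_compatiblePerms.1 hπ, ?_⟩
  have hsplit : #{j | IsLadder n π j} ≤ #{j ∈ big | IsLadder n π j} + #bigᶜ := by
    refine (card_le_card fun j hj => ?_).trans (card_union_le _ _)
    rw [mem_union, mem_filter, mem_compl]
    by_cases hj' : j ∈ big
    · exact Or.inl ⟨hj', (mem_filter.1 hj).2⟩
    · exact Or.inr hj'
  have hbig_le : #big ≤ n := by simpa using card_le_univ big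
  rw [card_compl, Fintype.card_fin] at hsplit
  rw [← hbig, permDeg]
  omega
end
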